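/- Let X and Y be noetherian schemes with X separated, and let f : X → Y be a morphism of finite type which is a formal immersion at a point x ∈ X, i.e., the induced homomorphism on completed local rings Ô_{Y,f(x)} → Ô_{X,x} is surjective. Suppose T is an integral noetherian scheme and p₁, p₂ : T → X are two morphisms (T-valued points of X) such that for some point t ∈ T one has p₁(t) = p₂(t) = x, and moreover f ∘ p₁ = f ∘ p₂. Then p₁ = p₂. -/

import Mathlib

open AlgebraicGeometry IsLocalRing CategoryTheory

set_option maxHeartbeats 1000000
set_option synthInstance.maxHeartbeats 1000000

/-- The adic completion of a commutative ring `R` at an ideal `I`, realized concretely as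
the subring of the product `Π n, R ⧸ I ^ n` consisting of the sequences that are compatible
with the canonical transition maps `R ⧸ I ^ n → R ⧸ I ^ m` for `m ≤ n`. -/
def adicCompletionSubring (R : Type*) [CommRing R] (I : Ideal R) :
    Subring (Π n : ℕ, R ⧸ I ^ n) where
  carrier := {f | ∀ ⦃m n : ℕ⦄ (h : m ≤ n),
    Ideal.Quotient.factor (S := I ^ n) (T := I ^ m) (Ideal.pow_le_pow_right h) (f n) = f m}
  zero_mem' := by intro m n h; simp
  one_mem' := by intro m n h; simp
  add_mem' := by
    intro f g hf hg m n h
    simp only [Pi.add_apply, map_add, hf h, hg h]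
  neg_mem' := by
    intro f hf m n h
    simp only [Pi.neg_apply, map_neg, hf h]
  mul_mem' := by
    intro f g hf hg m n h
    simp only [Pi.mul_apply, map_mul, hf h, hg h]

variable {A B : Type*} [CommRing A] [CommRing B]

theorem pow_le_comap_pow (φ : A →+* B) {I : Ideal A} {J : Ideal B}
    (h : I ≤ J.comap φ) (n : ℕ) : I ^ n ≤ (J ^ n).comap φ := by
  rw [← Ideal.map_le_iff_le_comap, Ideal.map_pow]
  exact Ideal.pow_right_mono (Ideal.map_le_iff_le_comap.mpr h) n

/-- The ring homomorphism between adic completions induced by a ring homomorphism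
`φ : A → B` carrying the ideal `I` of `A` into the ideal `J` of `B`. -/
def adicCompletionMap (φ : A →+* B) (I : Ideal A) (J : Ideal B) (h : I ≤ J.comap φ) :
    adicCompletionSubring A I →+* adicCompletionSubring B J :=
  RingHom.codRestrict
    ((Pi.ringHom fun n : ℕ =>
        (Ideal.quotientMap (J ^ n) φ (pow_le_comap_pow φ h n)).comp
          (Pi.evalRingHom (fun n : ℕ => A ⧸ I ^ n) n)).comp
      (adicCompletionSubring A I).subtype)
    (adicCompletionSubring B J)
    (by
      rintro ⟨f, hf⟩ m n hmn
      obtain ⟨a, ha⟩ := Ideal.Quotient.mk_surjective (f n)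
      have h1 : f m = Ideal.Quotient.mk (I ^ m) a := by rw [← hf hmn, ← ha]; simp
      show Ideal.Quotient.factor _ (Ideal.quotientMap (J ^ n) φ (pow_le_comap_pow φ h n) (f n)) =
        Ideal.quotientMap (J ^ m) φ (pow_le_comap_pow φ h m) (f m)
      simp [← ha, h1, Ideal.quotientMap_mk, Ideal.Quotient.factor_mk])

/-- The homomorphism `Ô_{Y,f(x)} → Ô_{X,x}` induced on the completed local rings of the
stalks by a morphism of schemes `f : X ⟶ Y` at a point `x` of `X`. -/
noncomputable def completedStalkMap {X Y : Scheme} (f : X ⟶ Y) (x : X) :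
    adicCompletionSubring (Y.presheaf.stalk (f.base x))
        (maximalIdeal (Y.presheaf.stalk (f.base x))) →+*
      adicCompletionSubring (X.presheaf.stalk x) (maximalIdeal (X.presheaf.stalk x)) :=
  adicCompletionMap (f.stalkMap x).hom _ _
    (fun a ha => by
      rw [Ideal.mem_comap, mem_maximalIdeal, mem_nonunits_iff]
      rw [mem_maximalIdeal, mem_nonunits_iff] at ha
      exact fun hu => ha (IsLocalHom.map_nonunit a hu))

/-- A morphism of schemes `f : X ⟶ Y` is a *formal immersion* at a point `x : X` if the
induced homomorphism on completed local rings `Ô_{Y,f(x)} → Ô_{X,x}` is surjective. -/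
def IsFormalImmersionAt {X Y : Scheme} (f : X ⟶ Y) (x : X) : Prop :=
  Function.Surjective (completedStalkMap f x)

/-! The equality `f ∘ p₁ = f ∘ p₂` and the surjectivity of `Ô_{Y,f(x)} → Ô_{X,x}` force the
two local homomorphisms `O_{X,x} → O_{T,t}` induced by `p₁` and `p₂` to agree after completion.
By Krull's intersection theorem the noetherian local ring `O_{T,t}` embeds in its completion, so
the stalk maps themselves agree. Hence `p₁` and `p₂` agree on an open neighbourhood of `t`, which
is dense since `T` is irreducible, and two morphisms from a reduced scheme to a separated one that
agree on a dense open subscheme are equal. -/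

section AdicCompletion

variable {C : Type*} [CommRing C]

def toAdicCompletionSubring (R : Type*) [CommRing R] (I : Ideal R) :
    R →+* adicCompletionSubring R I :=
  RingHom.codRestrict (RingHom.pi fun n : ℕ => Ideal.Quotient.mk (I ^ n)) _
    (fun a _ _ _ => Ideal.Quotient.factor_mk _ a)

theorem toAdicCompletionSubring_injective {R : Type*} [CommRing R] {I : Ideal R}
    (hI : ⨅ n, I ^ n = ⊥) : Function.Injective (toAdicCompletionSubring R I) := by
  refine (injective_iff_map_eq_zero _).mpr fun a ha => ?_
  have hmem : ∀ n : ℕ, a ∈ I ^ n := fun n =>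
    Ideal.Quotient.eq_zero_iff_mem.mp (congrArg (fun s => s.1 n) ha)
  rw [← Ideal.mem_bot, ← hI]
  exact Ideal.mem_iInf.mpr hmem

theorem adicCompletionMap_toAdicCompletionSubring (φ : A →+* B) (I : Ideal A) (J : Ideal B)
    (h : I ≤ J.comap φ) (a : A) :
    adicCompletionMap φ I J h (toAdicCompletionSubring A I a) =
      toAdicCompletionSubring B J (φ a) :=
  rfl

theorem adicCompletionMap_comp (φ : A →+* B) (ψ : B →+* C) (I : Ideal A) (J : Ideal B)
    (K : Ideal C) (hφ : I ≤ J.comap φ) (hψ : J ≤ K.comap ψ) :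
    (adicCompletionMap ψ J K hψ).comp (adicCompletionMap φ I J hφ) =
      adicCompletionMap (ψ.comp φ) I K (fun _ ha => hψ (hφ ha)) := by
  refine RingHom.ext fun x => Subtype.ext (funext fun n => ?_)
  obtain ⟨a, ha⟩ := Ideal.Quotient.mk_surjective (x.1 n)
  change Ideal.quotientMap (K ^ n) ψ (pow_le_comap_pow ψ hψ n)
      (Ideal.quotientMap (J ^ n) φ (pow_le_comap_pow φ hφ n) (x.1 n)) =
    Ideal.quotientMap (K ^ n) (ψ.comp φ)
      (pow_le_comap_pow (ψ.comp φ) (fun _ ha => hψ (hφ ha)) n) (x.1 n)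
  rw [← ha]
  rfl

theorem RingHom.eq_of_comp_eq_of_surjective_adicCompletionMap {I : Ideal A} {J : Ideal B}
    {K : Ideal C} (φ : A →+* B) (ψ₁ ψ₂ : B →+* C) (hφ : I ≤ J.comap φ)
    (hψ₁ : J ≤ K.comap ψ₁) (hψ₂ : J ≤ K.comap ψ₂)
    (hsurj : Function.Surjective (adicCompletionMap φ I J hφ)) (hK : ⨅ n, K ^ n = ⊥)
    (h : ψ₁.comp φ = ψ₂.comp φ) : ψ₁ = ψ₂ := by
  have hcompl : adicCompletionMap ψ₁ J K hψ₁ = adicCompletionMap ψ₂ J K hψ₂ := by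
    refine (RingHom.cancel_right hsurj).mp ?_
    rw [adicCompletionMap_comp, adicCompletionMap_comp]
    congr 1
  ext a
  apply toAdicCompletionSubring_injective hK
  rw [← adicCompletionMap_toAdicCompletionSubring ψ₁ J K hψ₁, hcompl,
    adicCompletionMap_toAdicCompletionSubring]

end AdicCompletion

theorem AlgebraicGeometry.Scheme.Hom.stalkMap_eq_of_comp_eq_of_isFormalImmersionAt
    {X Y T : Scheme} {f : X ⟶ Y} {p₁ p₂ : T ⟶ X} {t : T} (e : p₁ t = p₂ t)
    (hf : IsFormalImmersionAt f (p₁ t)) [IsNoetherianRing (T.presheaf.stalk t)]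
    (h : p₁ ≫ f = p₂ ≫ f) :
    p₁.stalkMap t =
      X.presheaf.stalkSpecializes (Inseparable.of_eq e.symm).specializes ≫ p₂.stalkMap t := by
  set σ := X.presheaf.stalkCongr (.of_eq e)
  have : IsLocalHom σ.hom.hom := isLocalHom_of_isIso _
  have hstalk : f.stalkMap (p₁ t) ≫ p₁.stalkMap t =
      f.stalkMap (p₁ t) ≫ σ.hom ≫ p₂.stalkMap t := by
    have h' := Scheme.Hom.stalkMap_congr_hom (p₁ ≫ f) (p₂ ≫ f) h t
    rw [Scheme.Hom.stalkMap_comp, Scheme.Hom.stalkMap_comp] at h'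
    rw [h', ← Category.assoc]
    refine (Category.assoc _ _ _).symm.trans (congrArg (· ≫ p₂.stalkMap t) ?_)
    rw [TopCat.Presheaf.stalkCongr_hom, TopCat.Presheaf.stalkCongr_hom]
    exact Scheme.Hom.stalkSpecializes_stalkMap f (p₂ t) (p₁ t) (specializes_of_eq e.symm)
  change p₁.stalkMap t = σ.hom ≫ p₂.stalkMap t
  exact CommRingCat.hom_ext <| RingHom.eq_of_comp_eq_of_surjective_adicCompletionMap _ _ _ _
    (maximalIdeal_comap _).ge (maximalIdeal_comap _).ge hf
    (Ideal.iInf_pow_eq_bot_of_isLocalRing _ (maximalIdeal.isMaximal _).ne_top)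
    (congrArg CommRingCat.Hom.hom hstalk)

theorem eq_of_formalImmersion_of_comp_eq_general
    (X Y : Scheme) [X.IsSeparated]
    (f : X ⟶ Y)
    (x : X) (hfx : IsFormalImmersionAt f x)
    (T : Scheme) [IsNoetherian T] [IsIntegral T]
    (p₁ p₂ : T ⟶ X) (t : T) (h₁ : p₁.base t = x) (h₂ : p₂.base t = x)
    (hcomp : p₁ ≫ f = p₂ ≫ f) : p₁ = p₂ := by
  subst h₁
  obtain ⟨U, htU, hU⟩ := spread_out_unique_of_isGermInjective p₁ p₂ h₂.symm
    (Scheme.Hom.stalkMap_eq_of_comp_eq_of_isFormalImmersionAt h₂.symm hfx hcomp)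
  have : IsDominant U.ι := Opens.isDominant_ι (U.isOpen.dense ⟨t, htU⟩)
  exact ext_of_isDominant U.ι hU

/-- **Rigidity of formal immersions** (Oesterlé; cf. Parent). Let `X`, `Y` be noetherian
schemes with `X` separated, and `f : X ⟶ Y` a morphism of finite type (i.e. locally of
finite type and quasi-compact) which is a formal immersion at `x : X`. If `T` is an
integral noetherian scheme, `p₁ p₂ : T ⟶ X` are two `T`-valued points with
`p₁ t = p₂ t = x` for some `t : T`, and `f ∘ p₁ = f ∘ p₂`, then `p₁ = p₂`. -/
theorem eq_of_formalImmersion_of_comp_eq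
    (X Y : Scheme) [IsNoetherian X] [IsNoetherian Y] [X.IsSeparated]
    (f : X ⟶ Y) [LocallyOfFiniteType f] [QuasiCompact f]
    (x : X) (hfx : IsFormalImmersionAt f x)
    (T : Scheme) [IsNoetherian T] [IsIntegral T]
    (p₁ p₂ : T ⟶ X) (t : T) (h₁ : p₁.base t = x) (h₂ : p₂.base t = x)
    (hcomp : p₁ ≫ f = p₂ ≫ f) : p₁ = p₂ :=
  eq_of_formalImmersion_of_comp_eq_general X Y f x hfx T p₁ p₂ t h₁ h₂ hcomp
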